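/- arXiv:1410.0342 — 3 statements merged into one kernel-verified Lean document; each statement's English description precedes it below -/
import Mathlib

section
/- For any matrix Z ∈ ℝ^{m×n} of rank at most k, the nuclear norm equals the infimum of (1/2)(‖X‖_F² + ‖Y‖_F²) over all factorizations Z = XY with X ∈ ℝ^{m×k}, Y ∈ ℝ^{k×n}, and this infimum is attained. -/
/-!
Let `Zᵀ Z` have orthonormal eigenvectors `vⱼ` with eigenvalues `σⱼ²`, and put `uⱼ = Z vⱼ / σⱼ` for
`σⱼ ≠ 0`; the `uⱼ` are orthonormal as well and `nuclearNorm Z = ∑ⱼ σⱼ = ∑ⱼ uⱼᵀ Z vⱼ`.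

If `Z = X Y`, then `uⱼᵀ Z vⱼ = ⟪Xᵀ uⱼ, Y vⱼ⟫ ≤ (‖Xᵀ uⱼ‖² + ‖Y vⱼ‖²) / 2`, and by Bessel's inequality
the sums of `‖Xᵀ uⱼ‖²` and `‖Y vⱼ‖²` are at most `‖X‖_F²` and `‖Y‖_F²`. Conversely, there are
`rank Z ≤ k` nonzero `σⱼ`, so the balanced factors with columns `σⱼ^(1/2) uⱼ` of `X` and rows
`σⱼ^(1/2) vⱼᵀ` of `Y`, padded with zeros to inner dimension `k`, attain the bound.
-/

open Matrix BigOperators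

/-- Frobenius norm squared of a real matrix. -/
noncomputable def frobSq {m n : ℕ} (X : Matrix (Fin m) (Fin n) ℝ) : ℝ :=
  ∑ i, ∑ j, (X i j) ^ 2

/-- Nuclear norm: sum of singular values, i.e. sum of square roots of the
eigenvalues of `Zᴴ * Z`. -/
noncomputable def nuclearNorm {m n : ℕ} (Z : Matrix (Fin m) (Fin n) ℝ) : ℝ :=
  ∑ j, Real.sqrt ((Matrix.isHermitian_conjTranspose_mul_self Z).eigenvalues j)

open Finset Function

section Padding

variable {R ι κ : Type*} [Fintype ι] [Fintype κ]

theorem sum_extend_zero_mul_extend_zero [NonUnitalNonAssocSemiring R] {e : ι → κ}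
    (he : Injective e) (f g : ι → R) :
    ∑ l, extend e f 0 l * extend e g 0 l = ∑ j, f j * g j :=
  (Fintype.sum_of_injective e he _ _
    (fun l hl => by simp [extend_apply' f (0 : κ → R) l (by simpa using hl)])
    fun j => by simp [he.extend_apply]).symm

noncomputable def padCols [Zero R] {m : Type*} (e : ι → κ) (A : Matrix m ι R) : Matrix m κ R :=
  of fun i => extend e (A i) 0

theorem padCols_mul_transpose_padCols [NonUnitalNonAssocSemiring R] {m n : Type*} {e : ι → κ}
    (he : Injective e) (A : Matrix m ι R) (B : Matrix n ι R) :
    padCols e A * (padCols e B)ᵀ = A * Bᵀ := by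
  ext i t
  exact sum_extend_zero_mul_extend_zero he (A i) (B t)

theorem frobSq_padCols {m k : ℕ} {e : ι → Fin k} (he : Injective e) (A : Matrix (Fin m) ι ℝ) :
    frobSq (padCols e A) = ∑ i, ∑ j, A i j ^ 2 := by
  simp only [frobSq, sq]
  exact sum_congr rfl fun i _ => sum_extend_zero_mul_extend_zero he (A i) (A i)

end Padding

theorem frobSq_transpose {m n : ℕ} (X : Matrix (Fin m) (Fin n) ℝ) : frobSq Xᵀ = frobSq X :=
  sum_comm

theorem two_mul_dotProduct_le {n : Type*} [Fintype n] (a b : n → ℝ) :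
    2 * (a ⬝ᵥ b) ≤ a ⬝ᵥ a + b ⬝ᵥ b := by
  simp only [dotProduct, mul_sum, ← sum_add_distrib]
  exact sum_le_sum fun i _ => by nlinarith [sq_nonneg (a i - b i)]

theorem sum_sum_mul_sq_of_dotProduct_self_eq_one {ι n : Type*} [Fintype ι] [Fintype n]
    (c : ι → ℝ) {w : ι → n → ℝ} (hw : ∀ j, w j ⬝ᵥ w j = 1) :
    ∑ i, ∑ j, (c j * w j i) ^ 2 = ∑ j, c j ^ 2 := by
  rw [sum_comm]
  refine sum_congr rfl fun j _ => ?_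
  rw [← mul_one (c j ^ 2), ← hw j, dotProduct, mul_sum]
  exact sum_congr rfl fun i _ => by ring

section Bessel

variable {ι : Type*} [Fintype ι]

theorem Orthonormal.sum_sq_dotProduct_le {n : Type*} [Fintype n]
    {u : ι → EuclideanSpace ℝ n} (hu : Orthonormal ℝ u) (x : n → ℝ) :
    ∑ j, ((u j).ofLp ⬝ᵥ x) ^ 2 ≤ x ⬝ᵥ x := by
  have := hu.sum_inner_products_le (s := univ) (WithLp.toLp 2 x)
  rw [← real_inner_self_eq_norm_sq] at this
  simpa only [EuclideanSpace.inner_eq_star_dotProduct, Real.norm_eq_abs, sq_abs, star_trivial,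
    dotProduct_comm x] using this

variable {m n k : ℕ}

theorem Orthonormal.sum_vecMul_dotProduct_le_frobSq {u : ι → EuclideanSpace ℝ (Fin m)}
    (hu : Orthonormal ℝ u) (X : Matrix (Fin m) (Fin k) ℝ) :
    ∑ j, ((u j).ofLp ᵥ* X) ⬝ᵥ ((u j).ofLp ᵥ* X) ≤ frobSq X :=
  calc ∑ j, ((u j).ofLp ᵥ* X) ⬝ᵥ ((u j).ofLp ᵥ* X)
      = ∑ l, ∑ j, ((u j).ofLp ⬝ᵥ Xᵀ l) ^ 2 := by
        rw [sum_comm]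
        simp only [dotProduct, vecMul, transpose_apply, sq]
    _ ≤ ∑ l, Xᵀ l ⬝ᵥ Xᵀ l := sum_le_sum fun l _ => hu.sum_sq_dotProduct_le (Xᵀ l)
    _ = frobSq X := by simp only [dotProduct, ← sq]; exact frobSq_transpose X

theorem sum_dotProduct_mul_mulVec_le_half_frobSq {u : ι → EuclideanSpace ℝ (Fin m)}
    {v : ι → EuclideanSpace ℝ (Fin n)} (hu : Orthonormal ℝ u) (hv : Orthonormal ℝ v)
    (X : Matrix (Fin m) (Fin k) ℝ) (Y : Matrix (Fin k) (Fin n) ℝ) :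
    ∑ j, (u j).ofLp ⬝ᵥ (X * Y) *ᵥ (v j).ofLp ≤ (frobSq X + frobSq Y) / 2 :=
  calc ∑ j, (u j).ofLp ⬝ᵥ (X * Y) *ᵥ (v j).ofLp
      ≤ ∑ j, (((u j).ofLp ᵥ* X) ⬝ᵥ ((u j).ofLp ᵥ* X) +
          ((v j).ofLp ᵥ* Yᵀ) ⬝ᵥ ((v j).ofLp ᵥ* Yᵀ)) / 2 := by
        refine sum_le_sum fun j _ => ?_
        rw [← mulVec_mulVec, dotProduct_mulVec, ← vecMul_transpose]
        linarith [two_mul_dotProduct_le ((u j).ofLp ᵥ* X) ((v j).ofLp ᵥ* Yᵀ)]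
    _ = (∑ j, ((u j).ofLp ᵥ* X) ⬝ᵥ ((u j).ofLp ᵥ* X) +
          ∑ j, ((v j).ofLp ᵥ* Yᵀ) ⬝ᵥ ((v j).ofLp ᵥ* Yᵀ)) / 2 := by
        rw [← sum_div, sum_add_distrib]
    _ ≤ (frobSq X + frobSq Y) / 2 := by
        rw [← frobSq_transpose Y]
        gcongr
        exacts [hu.sum_vecMul_dotProduct_le_frobSq X, hv.sum_vecMul_dotProduct_le_frobSq Yᵀ]

end Bessel

section SingularValues

variable {m n : ℕ} (Z : Matrix (Fin m) (Fin n) ℝ)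

noncomputable abbrev sqSingularValue (j : Fin n) : ℝ :=
  (isHermitian_conjTranspose_mul_self Z).eigenvalues j

noncomputable abbrev singularValue (j : Fin n) : ℝ := √(sqSingularValue Z j)

noncomputable abbrev rightSingularVector (j : Fin n) : EuclideanSpace ℝ (Fin n) :=
  (isHermitian_conjTranspose_mul_self Z).eigenvectorBasis j

abbrev NonzeroSingularIndex : Type := {j : Fin n // sqSingularValue Z j ≠ 0}

theorem orthonormal_rightSingularVector : Orthonormal ℝ (rightSingularVector Z) :=
  (isHermitian_conjTranspose_mul_self Z).eigenvectorBasis.orthonormal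

theorem conjTranspose_mul_self_mulVec_rightSingularVector (j : Fin n) :
    (Zᴴ * Z) *ᵥ (rightSingularVector Z j).ofLp =
      sqSingularValue Z j • (rightSingularVector Z j).ofLp :=
  (isHermitian_conjTranspose_mul_self Z).mulVec_eigenvectorBasis j

theorem rightSingularVector_dotProduct (i j : Fin n) :
    (rightSingularVector Z i).ofLp ⬝ᵥ (rightSingularVector Z j).ofLp =
      if i = j then 1 else 0 := by
  simpa [EuclideanSpace.inner_eq_star_dotProduct, dotProduct_comm] using
    orthonormal_iff_ite.mp (orthonormal_rightSingularVector Z) i j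

theorem mulVec_rightSingularVector_dotProduct (i j : Fin n) :
    (Z *ᵥ (rightSingularVector Z i).ofLp) ⬝ᵥ (Z *ᵥ (rightSingularVector Z j).ofLp) =
      if i = j then sqSingularValue Z j else 0 := by
  rw [dotProduct_mulVec, vecMul_mulVec, ← dotProduct_mulVec,
    ← conjTranspose_eq_transpose_of_trivial, conjTranspose_mul_self_mulVec_rightSingularVector,
    dotProduct_smul, rightSingularVector_dotProduct, smul_eq_mul, mul_ite, mul_one, mul_zero]

theorem mulVec_rightSingularVector_eq_zero {j : Fin n} (hj : sqSingularValue Z j = 0) :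
    Z *ᵥ (rightSingularVector Z j).ofLp = 0 := by
  rw [← dotProduct_self_eq_zero, mulVec_rightSingularVector_dotProduct, if_pos rfl, hj]

theorem sum_mulVec_rightSingularVector_mul (i : Fin m) (t : Fin n) :
    ∑ j, (Z *ᵥ (rightSingularVector Z j).ofLp) i * (rightSingularVector Z j).ofLp t = Z i t := by
  let V : Matrix (Fin n) (Fin n) ℝ := (isHermitian_conjTranspose_mul_self Z).eigenvectorUnitary
  calc _ = (Z * V * star V) i t := by
        simp only [V, mul_apply, star_apply, IsHermitian.eigenvectorUnitary_apply, star_trivial,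
          mulVec, dotProduct]
    _ = Z i t := by
        rw [Matrix.mul_assoc, Unitary.mul_star_self_of_mem (IsHermitian.eigenvectorUnitary _).2,
          Matrix.mul_one]

theorem card_nonzeroSingularIndex : Fintype.card (NonzeroSingularIndex Z) = Z.rank := by
  rw [← (isHermitian_conjTranspose_mul_self Z).rank_eq_card_non_zero_eigs,
    rank_conjTranspose_mul_self]

theorem sum_nonzeroSingularIndex {f : Fin n → ℝ} (hf : ∀ j, sqSingularValue Z j = 0 → f j = 0) :
    ∑ j : NonzeroSingularIndex Z, f j = ∑ j, f j := by
  rw [← Fintype.sum_subtype_add_sum_subtype (fun j => sqSingularValue Z j ≠ 0) f, eq_comm,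
    add_eq_left]
  exact Fintype.sum_eq_zero _ fun j => hf j (not_not.mp j.2)

theorem nuclearNorm_eq_sum_singularValue :
    nuclearNorm Z = ∑ j : NonzeroSingularIndex Z, singularValue Z j :=
  (sum_nonzeroSingularIndex Z (f := singularValue Z) fun j hj => by
    rw [singularValue, hj, Real.sqrt_zero]).symm

theorem singularValue_pos (j : NonzeroSingularIndex Z) : 0 < singularValue Z j :=
  Real.sqrt_pos.mpr ((eigenvalues_conjTranspose_mul_self_nonneg Z j).lt_of_ne' j.2)

theorem singularValue_mul_self (j : Fin n) :
    singularValue Z j * singularValue Z j = sqSingularValue Z j :=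
  Real.mul_self_sqrt (eigenvalues_conjTranspose_mul_self_nonneg Z j)

noncomputable def leftSingularVector (j : NonzeroSingularIndex Z) : EuclideanSpace ℝ (Fin m) :=
  WithLp.toLp 2 ((singularValue Z j)⁻¹ • Z *ᵥ (rightSingularVector Z j).ofLp)

theorem singularValue_smul_leftSingularVector (j : NonzeroSingularIndex Z) :
    singularValue Z j • (leftSingularVector Z j).ofLp = Z *ᵥ (rightSingularVector Z j).ofLp := by
  rw [leftSingularVector, WithLp.ofLp_toLp, smul_inv_smul₀ (singularValue_pos Z j).ne']

theorem leftSingularVector_dotProduct (i j : NonzeroSingularIndex Z) :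
    (leftSingularVector Z i).ofLp ⬝ᵥ (leftSingularVector Z j).ofLp = if i = j then 1 else 0 := by
  simp only [leftSingularVector, WithLp.ofLp_toLp, smul_dotProduct, dotProduct_smul,
    mulVec_rightSingularVector_dotProduct, Subtype.ext_iff, smul_eq_mul]
  split_ifs with hij
  · rw [hij, ← singularValue_mul_self]
    field_simp [(singularValue_pos Z j).ne']
  · simp

theorem orthonormal_leftSingularVector : Orthonormal ℝ (leftSingularVector Z) := by
  rw [orthonormal_iff_ite]
  intro i j
  simpa [EuclideanSpace.inner_eq_star_dotProduct, dotProduct_comm] using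
    leftSingularVector_dotProduct Z i j

theorem leftSingularVector_dotProduct_mulVec (j : NonzeroSingularIndex Z) :
    (leftSingularVector Z j).ofLp ⬝ᵥ Z *ᵥ (rightSingularVector Z j).ofLp = singularValue Z j := by
  rw [← singularValue_smul_leftSingularVector, dotProduct_smul, leftSingularVector_dotProduct,
    if_pos rfl, smul_eq_mul, mul_one]

theorem nuclearNorm_le_half_frobSq_of_mul_eq {k : ℕ} {X : Matrix (Fin m) (Fin k) ℝ}
    {Y : Matrix (Fin k) (Fin n) ℝ} (hXY : X * Y = Z) :
    nuclearNorm Z ≤ (frobSq X + frobSq Y) / 2 := by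
  subst hXY
  rw [nuclearNorm_eq_sum_singularValue]
  simp_rw [← leftSingularVector_dotProduct_mulVec]
  exact sum_dotProduct_mul_mulVec_le_half_frobSq (orthonormal_leftSingularVector _)
    ((orthonormal_rightSingularVector _).comp _ Subtype.val_injective) X Y

noncomputable def balancedLeftFactor : Matrix (Fin m) (NonzeroSingularIndex Z) ℝ :=
  of fun i j => √(singularValue Z j) * (leftSingularVector Z j).ofLp i

noncomputable def balancedRightFactor : Matrix (Fin n) (NonzeroSingularIndex Z) ℝ :=
  of fun t j => √(singularValue Z j) * (rightSingularVector Z j).ofLp t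

theorem balancedLeftFactor_mul_transpose_balancedRightFactor :
    balancedLeftFactor Z * (balancedRightFactor Z)ᵀ = Z := by
  ext i t
  calc ∑ j, balancedLeftFactor Z i j * balancedRightFactor Z t j
      = ∑ j : NonzeroSingularIndex Z,
          (Z *ᵥ (rightSingularVector Z j).ofLp) i * (rightSingularVector Z j).ofLp t := by
        refine sum_congr rfl fun j _ => ?_
        rw [← singularValue_smul_leftSingularVector, Pi.smul_apply, smul_eq_mul,
          ← Real.mul_self_sqrt (singularValue_pos Z j).le, balancedLeftFactor, balancedRightFactor,
          of_apply, of_apply]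
        ring
    _ = ∑ j, (Z *ᵥ (rightSingularVector Z j).ofLp) i * (rightSingularVector Z j).ofLp t :=
        sum_nonzeroSingularIndex Z
          (f := fun j => (Z *ᵥ (rightSingularVector Z j).ofLp) i * (rightSingularVector Z j).ofLp t)
          fun j hj => by rw [mulVec_rightSingularVector_eq_zero Z hj, Pi.zero_apply, zero_mul]
    _ = Z i t := sum_mulVec_rightSingularVector_mul Z i t

theorem sum_sq_balancedLeftFactor :
    ∑ i, ∑ j, balancedLeftFactor Z i j ^ 2 = ∑ j : NonzeroSingularIndex Z, singularValue Z j := by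
  simp only [balancedLeftFactor, of_apply]
  rw [sum_sum_mul_sq_of_dotProduct_self_eq_one _ fun j => by
    simpa using leftSingularVector_dotProduct Z j j]
  simp only [Real.sq_sqrt (Real.sqrt_nonneg _)]

theorem sum_sq_balancedRightFactor :
    ∑ t, ∑ j, balancedRightFactor Z t j ^ 2 = ∑ j : NonzeroSingularIndex Z, singularValue Z j := by
  simp only [balancedRightFactor, of_apply]
  rw [sum_sum_mul_sq_of_dotProduct_self_eq_one _ fun j => by
    simpa using rightSingularVector_dotProduct Z j j]
  simp only [Real.sq_sqrt (Real.sqrt_nonneg _)]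

theorem exists_mul_eq_half_frobSq_eq_nuclearNorm {k : ℕ} (hZ : Z.rank ≤ k) :
    ∃ (X : Matrix (Fin m) (Fin k) ℝ) (Y : Matrix (Fin k) (Fin n) ℝ),
      X * Y = Z ∧ (frobSq X + frobSq Y) / 2 = nuclearNorm Z := by
  obtain ⟨e⟩ : Nonempty (NonzeroSingularIndex Z ↪ Fin k) :=
    Function.Embedding.nonempty_of_card_le
      ((card_nonzeroSingularIndex Z).trans_le (hZ.trans_eq (Fintype.card_fin k).symm))
  refine ⟨padCols e (balancedLeftFactor Z), (padCols e (balancedRightFactor Z))ᵀ, ?_, ?_⟩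
  · rw [padCols_mul_transpose_padCols e.injective,
      balancedLeftFactor_mul_transpose_balancedRightFactor]
  · rw [frobSq_transpose, frobSq_padCols e.injective, frobSq_padCols e.injective,
      sum_sq_balancedLeftFactor, sum_sq_balancedRightFactor, nuclearNorm_eq_sum_singularValue,
      add_self_div_two]

end SingularValues

/-- For a matrix of rank at most `k`, the nuclear norm is the least value of
`(1/2)(‖X‖_F² + ‖Y‖_F²)` over factorizations `Z = XY` with inner dimension `k`,
and this least value is attained. -/
theorem nuclearNorm_isLeast_factorization {m n k : ℕ}
    (Z : Matrix (Fin m) (Fin n) ℝ) (hZ : Z.rank ≤ k) :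
    IsLeast {c : ℝ | ∃ (X : Matrix (Fin m) (Fin k) ℝ) (Y : Matrix (Fin k) (Fin n) ℝ),
      X * Y = Z ∧ c = (1 / 2) * (frobSq X + frobSq Y)} (nuclearNorm Z) := by
  constructor
  · obtain ⟨X, Y, hXY, hXY_norm⟩ := exists_mul_eq_half_frobSq_eq_nuclearNorm Z hZ
    exact ⟨X, Y, hXY, by rw [← hXY_norm]; ring⟩
  · rintro c ⟨X, Y, hXY, rfl⟩
    have := nuclearNorm_le_half_frobSq_of_mul_eq Z hXY
    linarith
end

section
/- For a permutation a of {1,…,d} and u ∈ ℝ^d, define L(u,a) = ∑_{i=1}^{d−1} (1 − u_{a(i)} + u_{a(i+1)})₊. If u has distinct entries, then the permutation sorting u in decreasing order (i.e., the â with u_{â(1)} > u_{â(2)} > ⋯ > u_{â(d)}) minimizes L(u,·) over all permutations a. -/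
open BigOperators

/-!
Write `v₀ ≥ v₁ ≥ ⋯ ≥ vₙ` for the sorted values and `Φ p = ∑_{k<p} min (vₖ - vₖ₊₁) 1`.
Since `min (·) 1` is subadditive on `[0, ∞)` and bounded by the identity, every step from
position `p` to position `q` pays at least `1 - (Φ q - Φ p)` (with equality for `q = p + 1`).
Summing over the steps of any walk `p₀, …, pₙ` in `{0, …, n}` telescopes to
`n - (Φ pₙ - Φ p₀) ≥ n - Φ n`, which is the loss of the sorted walk.
-/

open Finset

theorem min_add_le_min_add_min {α : Type*} [AddCommMonoid α] [LinearOrder α] [IsOrderedAddMonoid α]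
    {a b c : α} (ha : 0 ≤ a) (hb : 0 ≤ b) (hc : 0 ≤ c) :
    min (a + b) c ≤ min a c + min b c := by
  rcases le_total a c with hac | hca
  · rcases le_total b c with hbc | hcb
    · rw [min_eq_left hac, min_eq_left hbc]
      exact min_le_left _ _
    · rw [min_eq_right hcb]
      exact (min_le_right _ _).trans (le_add_of_nonneg_left (le_min ha hc))
  · rw [min_eq_right hca]
    exact (min_le_right _ _).trans (le_add_of_nonneg_right (le_min hb hc))

def cappedDescent (v : ℕ → ℝ) (p : ℕ) : ℝ :=
  ∑ k ∈ range p, min (v k - v (k + 1)) 1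

section CappedDescent

variable {v : ℕ → ℝ} {n p q : ℕ}

lemma cappedDescent_succ_sub (v : ℕ → ℝ) (p : ℕ) :
    cappedDescent v (p + 1) - cappedDescent v p = min (v p - v (p + 1)) 1 := by
  rw [cappedDescent, sum_range_succ, cappedDescent, add_sub_cancel_left]

lemma cappedDescent_sub_le (v : ℕ → ℝ) (hpq : p ≤ q) :
    cappedDescent v q - cappedDescent v p ≤ v p - v q := by
  induction q, hpq using Nat.le_induction with
  | base => simp
  | succ q _ ih =>
    have := cappedDescent_succ_sub v q
    have := min_le_left (v q - v (q + 1)) 1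
    linarith

lemma min_sub_le_cappedDescent_sub (hv : AntitoneOn v (Set.Iic n)) (hpq : p ≤ q) (hqn : q ≤ n) :
    min (v p - v q) 1 ≤ cappedDescent v q - cappedDescent v p := by
  induction q, hpq using Nat.le_induction with
  | base => simp
  | succ q hpq ih =>
    have hq : q ≤ n := by omega
    have hpq_drop : 0 ≤ v p - v q :=
      sub_nonneg.2 (hv (Set.mem_Iic.2 (hpq.trans hq)) (Set.mem_Iic.2 hq) hpq)
    have hstep_drop : 0 ≤ v q - v (q + 1) :=
      sub_nonneg.2 (hv (Set.mem_Iic.2 hq) (Set.mem_Iic.2 hqn) q.le_succ)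
    have := min_add_le_min_add_min hpq_drop hstep_drop zero_le_one
    rw [sub_add_sub_cancel] at this
    linarith [ih hq, cappedDescent_succ_sub v q]

lemma cappedDescent_mono (hv : AntitoneOn v (Set.Iic n)) (hpq : p ≤ q) (hqn : q ≤ n) :
    cappedDescent v p ≤ cappedDescent v q := by
  have hdrop : 0 ≤ v p - v q :=
    sub_nonneg.2 (hv (Set.mem_Iic.2 (hpq.trans hqn)) (Set.mem_Iic.2 hqn) hpq)
  have := min_sub_le_cappedDescent_sub hv hpq hqn
  linarith [le_min hdrop zero_le_one]

lemma hinge_eq_one_sub_min (x y : ℝ) : max (1 - x + y) 0 = 1 - min (x - y) 1 := by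
  rw [← max_sub_sub_left, sub_self, sub_sub_eq_add_sub, sub_add_eq_add_sub]

lemma one_sub_cappedDescent_sub_le_hinge (hv : AntitoneOn v (Set.Iic n)) (hq : q ≤ n) :
    1 - (cappedDescent v q - cappedDescent v p) ≤ max (1 - v p + v q) 0 := by
  rcases le_total p q with hpq | hqp
  · rw [hinge_eq_one_sub_min]
    linarith [min_sub_le_cappedDescent_sub hv hpq hq]
  · exact le_max_of_le_left (by linarith [cappedDescent_sub_le v hqp])

theorem sum_hinge_le_sum_hinge_of_antitoneOn (hv : AntitoneOn v (Set.Iic n)) (p : ℕ → ℕ)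
    (hp : ∀ i ≤ n, p i ≤ n) :
    ∑ k ∈ range n, max (1 - v k + v (k + 1)) 0 ≤
      ∑ i ∈ range n, max (1 - v (p i) + v (p (i + 1))) 0 :=
  calc ∑ k ∈ range n, max (1 - v k + v (k + 1)) 0
      = n - (cappedDescent v n - cappedDescent v 0) := by
        simp only [hinge_eq_one_sub_min, ← cappedDescent_succ_sub]
        rw [sum_sub_distrib, sum_range_sub]
        simp
    _ ≤ n - (cappedDescent v (p n) - cappedDescent v (p 0)) := by
        have := cappedDescent_mono hv (p 0).zero_le (hp 0 n.zero_le)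
        have := cappedDescent_mono hv (hp n le_rfl) le_rfl
        linarith
    _ = ∑ i ∈ range n, (1 - (cappedDescent v (p (i + 1)) - cappedDescent v (p i))) := by
        rw [sum_sub_distrib, sum_range_sub (fun i => cappedDescent v (p i))]
        simp
    _ ≤ ∑ i ∈ range n, max (1 - v (p i) + v (p (i + 1))) 0 :=
        sum_le_sum fun i hi =>
          one_sub_cappedDescent_sub_le_hinge hv (hp _ (mem_range.1 hi))

end CappedDescent

lemma sum_fin_adjacent_eq_sum_range {d : ℕ} (F : ℝ → ℝ → ℝ) (x : Fin d → ℝ) (X : ℕ → ℝ)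
    (hX : ∀ k (hk : k < d), X k = x ⟨k, hk⟩) :
    ∑ i : Fin (d - 1), F (x ⟨i.1, i.isLt.trans_le (Nat.sub_le d 1)⟩)
        (x ⟨i.1 + 1, Nat.add_lt_of_lt_sub i.isLt⟩) =
      ∑ i ∈ range (d - 1), F (X i) (X (i + 1)) := by
  rw [← Fin.sum_univ_eq_sum_range (fun i => F (X i) (X (i + 1)))]
  refine sum_congr rfl fun i _ => ?_
  rw [hX, hX]

/-- The permutation loss `L(u,a) = ∑ᵢ (1 - u_{a(i)} + u_{a(i+1)})₊` is minimized,
over all permutations `a`, by the permutation sorting `u` in decreasing order. -/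
theorem permutation_loss_argmin_sort {d : ℕ} (u : Fin d → ℝ)
    (asort : Equiv.Perm (Fin d))
    (hsort : ∀ i : Fin (d - 1),
      u (asort ⟨i.1 + 1, by have := i.isLt; omega⟩) < u (asort ⟨i.1, by have := i.isLt; omega⟩)) :
    ∀ a : Equiv.Perm (Fin d),
      (∑ i : Fin (d - 1),
        max (1 - u (asort ⟨i.1, by have := i.isLt; omega⟩)
              + u (asort ⟨i.1 + 1, by have := i.isLt; omega⟩)) 0) ≤
      ∑ i : Fin (d - 1),
        max (1 - u (a ⟨i.1, by have := i.isLt; omega⟩)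
              + u (a ⟨i.1 + 1, by have := i.isLt; omega⟩)) 0 := by
  intro a
  let v : ℕ → ℝ := fun k => if h : k < d then u (asort ⟨k, h⟩) else 0
  let pos : ℕ → ℕ := fun k => if h : k < d then (asort.symm (a ⟨k, h⟩)).1 else 0
  have hv : AntitoneOn v (Set.Iic (d - 1)) := by
    refine (strictAntiOn_Iic_of_succ_lt fun m hm => ?_).antitoneOn
    simpa [v, show m + 1 < d by omega, show m < d by omega] using hsort ⟨m, hm⟩
  have hpos : ∀ i ≤ d - 1, pos i ≤ d - 1 := fun i _ => by
    unfold pos; split_ifs <;> omega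
  have hvpos : ∀ k (hk : k < d), v (pos k) = u (a ⟨k, hk⟩) := fun k hk => by simp [v, pos, hk]
  calc _ = ∑ k ∈ range (d - 1), max (1 - v k + v (k + 1)) 0 :=
        sum_fin_adjacent_eq_sum_range (fun x y => max (1 - x + y) 0) (u ∘ asort) v
          fun k hk => dif_pos hk
    _ ≤ ∑ i ∈ range (d - 1), max (1 - v (pos i) + v (pos (i + 1))) 0 :=
        sum_hinge_le_sum_hinge_of_antitoneOn hv pos hpos
    _ = _ := (sum_fin_adjacent_eq_sum_range (fun x y => max (1 - x + y) 0) (u ∘ a) _ hvpos).symm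
end

section
/- At any stationary point (X, Y) of the quadratically regularized PCA objective f(X,Y) = ‖A − XY‖_F² + γ‖X‖_F² + γ‖Y‖_F² with γ > 0, one has XᵀX = YYᵀ. -/
open Matrix

theorem smul_transpose_mul_self_eq_smul_mul_transpose {α m n k : Type*} [CommSemiring α]
    [Fintype m] [Fintype n] [Fintype k] (R : Matrix m n α) (X : Matrix m k α)
    (Y : Matrix k n α) (γ : α) (hX : R * Yᵀ = γ • X) (hY : Xᵀ * R = γ • Y) :
    γ • (Xᵀ * X) = γ • (Y * Yᵀ) :=
  calc γ • (Xᵀ * X) = Xᵀ * (R * Yᵀ) := by rw [hX, Matrix.mul_smul]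
    _ = (Xᵀ * R) * Yᵀ := (Matrix.mul_assoc _ _ _).symm
    _ = γ • (Y * Yᵀ) := by rw [hY, Matrix.smul_mul]

/-- At any stationary point of quadratically regularized PCA with `γ > 0`,
`XᵀX = YYᵀ`. -/
theorem stationary_point_gram_eq {m n k : ℕ} (A : Matrix (Fin m) (Fin n) ℝ)
    (X : Matrix (Fin m) (Fin k) ℝ) (Y : Matrix (Fin k) (Fin n) ℝ)
    (γ : ℝ) (hγ : 0 < γ)
    (h1 : -((A - X * Y) * Yᵀ) + γ • X = 0)
    (h2 : -((A - X * Y)ᵀ * X) + γ • Yᵀ = 0) :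
    Xᵀ * X = Y * Yᵀ := by
  have hX : (A - X * Y) * Yᵀ = γ • X := neg_add_eq_zero.mp h1
  have hY : Xᵀ * (A - X * Y) = γ • Y := by
    simpa only [transpose_mul, transpose_transpose, transpose_smul] using
      congrArg transpose (neg_add_eq_zero.mp h2)
  exact smul_right_injective _ hγ.ne'
    (smul_transpose_mul_self_eq_smul_mul_transpose _ X Y γ hX hY)
end
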